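/- Define ψ(ξ) = ξ₁ξ₂² + (ξ₃ − ξ₂ξ₄)² on ℂ⁴, Γ = ∇ψ, and for ξ₂ ≠ 0 the kernel direction map κ(ξ) = ℂ-span of (ξ₃/ξ₂ − ξ₄, 0, ξ₂, 1). Then κ has no continuous extension to points of the set {ξ : ξ₂ = ξ₃ = 0}: for any ξ⁰ with ξ₂⁰ = ξ₃⁰ = 0, there exist two sequences ξʲ, ηʲ with ξ₂ʲ, η₂ʲ ≠ 0 converging to ξ⁰ such that the corresponding kernel lines κ(ξʲ) and κ(ηʲ) converge to two distinct lines in ℂ⁴. -/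

import Mathlib

/-!
Approach `ξ₀` along the curve `t ↦ (ξ₀₁, t, c t, ξ₀₄)`, on which `ξ₃ / ξ₂ = c`. There the kernel
vector is `(c − ξ₀₄, 0, t, 1)`, which tends to `(c − ξ₀₄, 0, 0, 1)` as `t → 0`. Different slopes `c`
give non-proportional limits, since the last coordinates agree and the first ones do not.
-/

/-- The spanning vector of the kernel line of the Hessian of
`ψ(ξ) = ξ₁ξ₂² + (ξ₃ − ξ₂ξ₄)²` at a point with `ξ₂ ≠ 0`. -/
noncomputable def kerVec (ξ : Fin 4 → ℂ) : Fin 4 → ℂ :=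
  ![ξ 2 / ξ 1 - ξ 3, 0, ξ 1, 1]

open Filter Topology

theorem Filter.Tendsto.inv_norm_smul {α E : Type*} [NormedAddCommGroup E] [NormedSpace ℝ E]
    {l : Filter α} {f : α → E} {v : E} (hf : Tendsto f l (𝓝 v)) (hv : v ≠ 0) :
    Tendsto (fun x => ‖f x‖⁻¹ • f x) l (𝓝 (‖v‖⁻¹ • v)) :=
  (hf.norm.inv₀ (norm_ne_zero_iff.mpr hv)).smul hf

theorem span_singleton_inv_norm_smul {K E : Type*} [RCLike K] [NormedAddCommGroup E]
    [NormedSpace K E] [Module ℝ E] [IsScalarTower ℝ K E] (v : E) :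
    K ∙ (‖v‖⁻¹ • v) = K ∙ v := by
  rcases eq_or_ne v 0 with rfl | hv
  · simp
  rw [RCLike.real_smul_eq_coe_smul (K := K)]
  exact Submodule.span_singleton_smul_eq (by simpa using hv) v

theorem span_singleton_ne_of_apply_eq_one {K ι : Type*} [Field K] {u v : ι → K} (i : ι)
    (hu : u i = 1) (hv : v i = 1) (huv : u ≠ v) : K ∙ u ≠ K ∙ v := by
  intro h
  obtain ⟨a, rfl⟩ := Submodule.mem_span_singleton.mp (h ▸ Submodule.mem_span_singleton_self v)
  have ha : a = 1 := by simpa [hu] using hv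
  exact huv (by simp [ha])

/-- Indices are 0-based: `slopePoint ξ₀ c t` has `ξ₂ = t` and `ξ₃ = c t`. -/
def slopePoint (ξ₀ : Fin 4 → ℂ) (c t : ℂ) : Fin 4 → ℂ :=
  ![ξ₀ 0, t, c * t, ξ₀ 3]

def kerLimit (ξ₀ : Fin 4 → ℂ) (c : ℂ) : Fin 4 → ℂ :=
  ![c - ξ₀ 3, 0, 0, 1]

theorem kerLimit_ne_zero (ξ₀ : Fin 4 → ℂ) (c : ℂ) : kerLimit ξ₀ c ≠ 0 :=
  fun h => by simpa [kerLimit] using congrFun h 3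

theorem kerLimit_injective (ξ₀ : Fin 4 → ℂ) : Function.Injective (kerLimit ξ₀) :=
  fun c d h => by simpa [kerLimit] using congrFun h 0

theorem continuous_slopePoint (ξ₀ : Fin 4 → ℂ) (c : ℂ) : Continuous (slopePoint ξ₀ c) := by
  unfold slopePoint
  fun_prop

theorem slopePoint_zero {ξ₀ : Fin 4 → ℂ} (h2 : ξ₀ 1 = 0) (h3 : ξ₀ 2 = 0) (c : ℂ) :
    slopePoint ξ₀ c 0 = ξ₀ := by
  ext i
  fin_cases i <;> simp [slopePoint, h2, h3]

theorem kerVec_slopePoint (ξ₀ : Fin 4 → ℂ) (c : ℂ) {t : ℂ} (ht : t ≠ 0) :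
    kerVec (slopePoint ξ₀ c t) = ![c - ξ₀ 3, 0, t, 1] := by
  ext i
  fin_cases i <;> simp [kerVec, slopePoint, ht]

theorem exists_seq_tendsto_kerLimit {ξ₀ : Fin 4 → ℂ} (h2 : ξ₀ 1 = 0) (h3 : ξ₀ 2 = 0) (c : ℂ) :
    ∃ ξ : ℕ → Fin 4 → ℂ, (∀ j, ξ j 1 ≠ 0) ∧ Tendsto ξ atTop (𝓝 ξ₀) ∧
      Tendsto (fun j => ‖kerVec (ξ j)‖⁻¹ • kerVec (ξ j)) atTop
        (𝓝 (‖kerLimit ξ₀ c‖⁻¹ • kerLimit ξ₀ c)) := by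
  set ε : ℕ → ℂ := fun j => 1 / ((j : ℂ) + 1)
  have hε : ∀ j, ε j ≠ 0 := fun j => one_div_ne_zero (Nat.cast_add_one_ne_zero j)
  have hε0 : Tendsto ε atTop (𝓝 0) := tendsto_one_div_add_atTop_nhds_zero_nat
  refine ⟨fun j => slopePoint ξ₀ c (ε j), fun j => by simpa [slopePoint] using hε j, ?_, ?_⟩
  · exact slopePoint_zero h2 h3 c ▸ ((continuous_slopePoint ξ₀ c).tendsto 0).comp hε0
  · have hker : Tendsto (fun j => kerVec (slopePoint ξ₀ c (ε j))) atTop (𝓝 (kerLimit ξ₀ c)) := by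
      simp_rw [kerVec_slopePoint ξ₀ c (hε _)]
      have hcont : Continuous fun t : ℂ => ![c - ξ₀ 3, 0, t, 1] := by fun_prop
      exact (hcont.tendsto 0).comp hε0
    exact hker.inv_norm_smul (kerLimit_ne_zero ξ₀ c)

theorem stmt_9 (ξ₀ : Fin 4 → ℂ) (h2 : ξ₀ 1 = 0) (h3 : ξ₀ 2 = 0) :
    ∃ (ξ η : ℕ → Fin 4 → ℂ) (w₁ w₂ : Fin 4 → ℂ),
      (∀ j, (ξ j) 1 ≠ 0) ∧ (∀ j, (η j) 1 ≠ 0) ∧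
      Filter.Tendsto ξ Filter.atTop (nhds ξ₀) ∧
      Filter.Tendsto η Filter.atTop (nhds ξ₀) ∧
      Filter.Tendsto (fun j => ‖kerVec (ξ j)‖⁻¹ • kerVec (ξ j)) Filter.atTop (nhds w₁) ∧
      Filter.Tendsto (fun j => ‖kerVec (η j)‖⁻¹ • kerVec (η j)) Filter.atTop (nhds w₂) ∧
      w₁ ≠ 0 ∧ w₂ ≠ 0 ∧
      Submodule.span ℂ {w₁} ≠ Submodule.span ℂ {w₂} := by
  obtain ⟨ξ, hξ1, hξ, hkξ⟩ := exists_seq_tendsto_kerLimit h2 h3 0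
  obtain ⟨η, hη1, hη, hkη⟩ := exists_seq_tendsto_kerLimit h2 h3 1
  have hw : ∀ c, ‖kerLimit ξ₀ c‖⁻¹ • kerLimit ξ₀ c ≠ 0 := fun c =>
    have hc := kerLimit_ne_zero ξ₀ c
    smul_ne_zero (inv_ne_zero (norm_ne_zero_iff.mpr hc)) hc
  refine ⟨ξ, η, _, _, hξ1, hη1, hξ, hη, hkξ, hkη, hw 0, hw 1, ?_⟩
  rw [span_singleton_inv_norm_smul, span_singleton_inv_norm_smul]
  exact span_singleton_ne_of_apply_eq_one 3 rfl rfl ((kerLimit_injective ξ₀).ne zero_ne_one)
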